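/- Let m, n be positive integers. Every vector Λ ∈ ℝ^{m+n} satisfies Λ = Σ_{i=2}^{m} (Λ, φ̄_i) Ω̄_i − Σ_{μ=2}^{n} (Λ, φ̄_{m+μ}) Ω̄_μ − [ (Λ, φ̄_{m+1}) + Σ_{i=2}^{m} (m−i+1)(Λ, φ̄_i) ] ε̄ + (Λ, φ̄_1) δ, where Ω̄_i = ω̄_i + (m−i+1) ω̄_{m+1} for 1 < i ≤ m, Ω̄_μ = ω̄_{m+μ} for 1 < μ ≤ n, ε̄ = ω̄_{m+1}, and δ = ω̄_1. -/
import Mathlib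


open Finset

/-- The `i`-th standard basis vector `ε_i` (1-based, `1 ≤ i ≤ m`) of `ℝ^{m+n}`. -/
noncomputable def eps (m n : ℕ) (i : ℕ) : Fin (m + n) → ℝ :=
  fun j => if (j : ℕ) + 1 = i then 1 else 0

/-- The `(m+μ)`-th standard basis vector `δ_μ` (1-based, `1 ≤ μ ≤ n`) of `ℝ^{m+n}`. -/
noncomputable def delta (m n : ℕ) (μ : ℕ) : Fin (m + n) → ℝ :=
  fun j => if (j : ℕ) + 1 = m + μ then 1 else 0

/-- The `a`-th component (1-based) of a vector in `ℝ^{m+n}`. -/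
noncomputable def comp (m n : ℕ) (x : Fin (m + n) → ℝ) (a : ℕ) : ℝ :=
  if h : 1 ≤ a ∧ a ≤ m + n then x ⟨a - 1, by omega⟩ else 0

/-- The graded bilinear form `(Λ,Λ') = Σ_{i=1}^m Λ_i Λ'_i − Σ_{μ=1}^n Λ_{m+μ} Λ'_{m+μ}`. -/
noncomputable def gform (m n : ℕ) (x y : Fin (m + n) → ℝ) : ℝ :=
  (∑ i ∈ Finset.Icc 1 m, comp m n x i * comp m n y i)
    - ∑ μ ∈ Finset.Icc 1 n, comp m n x (m + μ) * comp m n y (m + μ)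

/-- The graded half-sum of positive roots
`ρ = (1/2) Σ_{j=1}^m (m−n−2j+1) ε_j + (1/2) Σ_{ν=1}^n (m+n−2ν+1) δ_ν`. -/
noncomputable def rho (m n : ℕ) : Fin (m + n) → ℝ :=
  (∑ j ∈ Finset.Icc 1 m, (((m : ℝ) - (n : ℝ) - 2 * (j : ℝ) + 1) / 2) • eps m n j)
    + ∑ ν ∈ Finset.Icc 1 n, (((m : ℝ) + (n : ℝ) - 2 * (ν : ℝ) + 1) / 2) • delta m n ν

/-- Dominance: `Λ_1 ≥ … ≥ Λ_m` and `Λ_{m+1} ≥ … ≥ Λ_{m+n}`. -/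
def Dominant (m n : ℕ) (Λ : Fin (m + n) → ℝ) : Prop :=
  (∀ i, 1 ≤ i → i < m → comp m n Λ (i + 1) ≤ comp m n Λ i) ∧
  (∀ μ, 1 ≤ μ → μ < n → comp m n Λ (m + μ + 1) ≤ comp m n Λ (m + μ))

/-- The extended simple roots `φ̄_a`, `1 ≤ a ≤ m+n`:
`φ̄_1 = −ε_1`, `φ̄_i = ε_{i−1}−ε_i` for `1 < i ≤ m`, `φ̄_{m+1} = ε_m − δ_1`,
`φ̄_{m+μ} = δ_{μ−1}−δ_μ` for `1 < μ ≤ n`. -/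
noncomputable def phiBar (m n : ℕ) (a : ℕ) : Fin (m + n) → ℝ :=
  if a = 1 then -eps m n 1
  else if a ≤ m then eps m n (a - 1) - eps m n a
  else if a = m + 1 then eps m n m - delta m n 1
  else delta m n (a - m - 1) - delta m n (a - m)

/-- The dual weights: `ω̄_i = −Σ_{k=i}^m ε_k + Σ_{ν=1}^n δ_ν` for `1 ≤ i ≤ m`, and
`ω̄_{m+μ} = −Σ_{ν=μ}^n δ_ν` for `1 ≤ μ ≤ n`. -/
noncomputable def omegaBar (m n : ℕ) (a : ℕ) : Fin (m + n) → ℝ :=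
  if a ≤ m then (-∑ k ∈ Finset.Icc a m, eps m n k) + ∑ ν ∈ Finset.Icc 1 n, delta m n ν
  else -∑ ν ∈ Finset.Icc (a - m) n, delta m n ν

lemma comp_sub (m n : ℕ) (x y : Fin (m+n) → ℝ) (a : ℕ) :
    comp m n (x - y) a = comp m n x a - comp m n y a := by
  unfold comp; split <;> simp

lemma comp_neg (m n : ℕ) (x : Fin (m+n) → ℝ) (a : ℕ) :
    comp m n (-x) a = -comp m n x a := by
  unfold comp; split <;> simp

lemma gform_sub (m n : ℕ) (Λ x y : Fin (m+n) → ℝ) :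
    gform m n Λ (x - y) = gform m n Λ x - gform m n Λ y := by
  simp only [gform, comp_sub, mul_sub, Finset.sum_sub_distrib]; ring

lemma gform_neg (m n : ℕ) (Λ x : Fin (m+n) → ℝ) :
    gform m n Λ (-x) = -gform m n Λ x := by
  simp only [gform, comp_neg, mul_neg, Finset.sum_neg_distrib]; ring

lemma comp_eps (m n i a : ℕ) (h1 : 1 ≤ a) (h2 : a ≤ m + n) :
    comp m n (eps m n i) a = if a = i then 1 else 0 := by
  unfold comp eps
  rw [dif_pos ⟨h1, h2⟩]
  simp only
  rw [Nat.sub_add_cancel h1]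

lemma comp_delta (m n μ a : ℕ) (h1 : 1 ≤ a) (h2 : a ≤ m + n) :
    comp m n (delta m n μ) a = if a = m + μ then 1 else 0 := by
  unfold comp delta
  rw [dif_pos ⟨h1, h2⟩]
  simp only
  rw [Nat.sub_add_cancel h1]

lemma gform_eps (m n : ℕ) (Λ : Fin (m+n) → ℝ) (i : ℕ) (h1 : 1 ≤ i) (h2 : i ≤ m) :
    gform m n Λ (eps m n i) = comp m n Λ i := by
  unfold gform
  have e1 : ∑ a ∈ Icc 1 m, comp m n Λ a * comp m n (eps m n i) a = comp m n Λ i := by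
    rw [Finset.sum_congr rfl (g := fun a => if a = i then comp m n Λ a else 0)
      (fun a ha => by
        rw [Finset.mem_Icc] at ha
        rw [comp_eps m n i a ha.1 (by omega)]
        split <;> simp_all)]
    rw [Finset.sum_ite_eq', if_pos (Finset.mem_Icc.mpr ⟨h1, h2⟩)]
  have e2 : ∑ μ ∈ Icc 1 n, comp m n Λ (m+μ) * comp m n (eps m n i) (m+μ) = 0 := by
    apply Finset.sum_eq_zero
    intro μ hμ; rw [Finset.mem_Icc] at hμ
    rw [comp_eps m n i (m+μ) (by omega) (by omega), if_neg (by omega)]; ring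
  rw [e1, e2, sub_zero]

lemma gform_delta (m n : ℕ) (Λ : Fin (m+n) → ℝ) (μ : ℕ) (h1 : 1 ≤ μ) (h2 : μ ≤ n) :
    gform m n Λ (delta m n μ) = -comp m n Λ (m + μ) := by
  unfold gform
  have e1 : ∑ a ∈ Icc 1 m, comp m n Λ a * comp m n (delta m n μ) a = 0 := by
    apply Finset.sum_eq_zero
    intro a ha; rw [Finset.mem_Icc] at ha
    rw [comp_delta m n μ a (by omega) (by omega), if_neg (by omega)]; ring
  have e2 : ∑ ν ∈ Icc 1 n, comp m n Λ (m+ν) * comp m n (delta m n μ) (m+ν)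
      = comp m n Λ (m + μ) := by
    rw [Finset.sum_congr rfl (g := fun ν => if ν = μ then comp m n Λ (m+ν) else 0)
      (fun ν hν => by
        rw [Finset.mem_Icc] at hν
        rw [comp_delta m n μ (m+ν) (by omega) (by omega)]
        by_cases h : ν = μ
        · rw [if_pos (by omega), if_pos h]; ring
        · rw [if_neg (by omega), if_neg h]; ring)]
    rw [Finset.sum_ite_eq', if_pos (Finset.mem_Icc.mpr ⟨h1, h2⟩)]
  rw [e1, e2, zero_sub]
lemma gform_phi1 (m n : ℕ) (hm : 0 < m) (Λ : Fin (m+n) → ℝ) :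
    gform m n Λ (phiBar m n 1) = -comp m n Λ 1 := by
  unfold phiBar
  rw [if_pos rfl, gform_neg, gform_eps m n Λ 1 le_rfl hm]

lemma gform_phi_mid (m n : ℕ) (Λ : Fin (m+n) → ℝ) (i : ℕ) (h1 : 2 ≤ i) (h2 : i ≤ m) :
    gform m n Λ (phiBar m n i) = comp m n Λ (i-1) - comp m n Λ i := by
  unfold phiBar
  rw [if_neg (by omega), if_pos h2, gform_sub,
    gform_eps m n Λ (i-1) (by omega) (by omega), gform_eps m n Λ i (by omega) h2]

lemma gform_phi_m1 (m n : ℕ) (hm : 0 < m) (hn : 0 < n) (Λ : Fin (m+n) → ℝ) :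
    gform m n Λ (phiBar m n (m+1)) = comp m n Λ m + comp m n Λ (m+1) := by
  unfold phiBar
  rw [if_neg (by omega), if_neg (by omega), if_pos rfl, gform_sub,
    gform_eps m n Λ m hm le_rfl, gform_delta m n Λ 1 le_rfl hn]
  ring

lemma gform_phi_mu (m n : ℕ) (Λ : Fin (m+n) → ℝ) (μ : ℕ) (h1 : 2 ≤ μ) (h2 : μ ≤ n) :
    gform m n Λ (phiBar m n (m+μ)) = comp m n Λ (m+μ) - comp m n Λ (m+μ-1) := by
  unfold phiBar
  rw [if_neg (by omega), if_neg (by omega), if_neg (by omega), gform_sub]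
  have e1 : m + μ - m - 1 = μ - 1 := by omega
  have e2 : m + μ - m = μ := by omega
  rw [e1, e2, gform_delta m n Λ (μ-1) (by omega) (by omega), gform_delta m n Λ μ (by omega) h2]
  have : m + (μ - 1) = m + μ - 1 := by omega
  rw [this]; ring

lemma omegaBar_apply_le (m n : ℕ) (a : ℕ) (h2 : a ≤ m) (j : Fin (m+n)) :
    omegaBar m n a j =
      if (j:ℕ)+1 ≤ m then (if a ≤ (j:ℕ)+1 then -1 else 0) else 1 := by
  have hj : (j:ℕ) < m + n := j.isLt
  unfold omegaBar
  rw [if_pos h2]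
  simp only [Pi.add_apply, Pi.neg_apply, Finset.sum_apply]
  have e1 : ∑ k ∈ Icc a m, eps m n k j = if (j:ℕ)+1 ∈ Icc a m then 1 else 0 := by
    unfold eps
    exact Finset.sum_ite_eq (Icc a m) ((j:ℕ)+1) (fun _ => (1:ℝ))
  have e2 : ∑ ν ∈ Icc 1 n, delta m n ν j = if m + 1 ≤ (j:ℕ)+1 then 1 else 0 := by
    unfold delta
    by_cases h : m + 1 ≤ (j:ℕ)+1
    · rw [if_pos h, Finset.sum_eq_single ((j:ℕ)+1-m)]
      · rw [if_pos (by omega)]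
      · intro b hb hne; rw [Finset.mem_Icc] at hb; rw [if_neg (by omega)]
      · intro hmem; exact absurd (Finset.mem_Icc.mpr ⟨by omega, by omega⟩) hmem
    · rw [if_neg h]
      exact Finset.sum_eq_zero fun ν hν => by
        rw [Finset.mem_Icc] at hν; rw [if_neg (by omega)]
  rw [e1, e2]
  simp only [Finset.mem_Icc]
  split_ifs <;> first | omega | norm_num | (exfalso; omega)

lemma omegaBar_apply_gt (m n : ℕ) (μ : ℕ) (h1 : 1 ≤ μ) (j : Fin (m+n)) :
    omegaBar m n (m+μ) j =
      if (j:ℕ)+1 ≤ m then 0 else (if μ ≤ (j:ℕ)+1-m then -1 else 0) := by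
  have hj : (j:ℕ) < m + n := j.isLt
  unfold omegaBar
  rw [if_neg (by omega)]
  simp only [Pi.neg_apply, Finset.sum_apply]
  have e3 : m + μ - m = μ := by omega
  rw [e3]
  have e2 : ∑ ν ∈ Icc μ n, delta m n ν j =
      if m < (j:ℕ)+1 ∧ μ ≤ (j:ℕ)+1-m then 1 else 0 := by
    unfold delta
    by_cases h : m < (j:ℕ)+1 ∧ μ ≤ (j:ℕ)+1-m
    · rw [if_pos h, Finset.sum_eq_single ((j:ℕ)+1-m)]
      · rw [if_pos (by omega)]
      · intro b hb hne; rw [Finset.mem_Icc] at hb; rw [if_neg (by omega)]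
      · intro hmem; exact absurd (Finset.mem_Icc.mpr ⟨by omega, by omega⟩) hmem
    · rw [if_neg h]
      exact Finset.sum_eq_zero fun ν hν => by
        rw [Finset.mem_Icc] at hν; rw [if_neg (by omega)]
  rw [e2]
  split_ifs <;> first | omega | norm_num | (exfalso; omega)

lemma comp_val (m n : ℕ) (Λ : Fin (m+n) → ℝ) (j : Fin (m+n)) :
    comp m n Λ ((j:ℕ)+1) = Λ j := by
  have hj : (j:ℕ) < m + n := j.isLt
  unfold comp
  rw [dif_pos ⟨by omega, by omega⟩]
  simp

lemma tele (g : ℕ → ℝ) (k : ℕ) (hk : 1 ≤ k) :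
    ∑ i ∈ Finset.Icc 2 k, (g (i-1) - g i) = g 1 - g k := by
  induction k with
  | zero => omega
  | succ k ih =>
    rcases Nat.lt_or_ge k 1 with h | h
    · interval_cases k
      · simp
    · rw [Finset.sum_Icc_succ_top (by omega), ih h]
      simp only [Nat.add_sub_cancel]
      try ring

lemma restrict (f : ℕ → ℝ) (k M : ℕ) (hk : k ≤ M) :
    ∑ i ∈ Finset.Icc 2 M, (if i ≤ k then f i else 0) = ∑ i ∈ Finset.Icc 2 k, f i := by
  rw [← Finset.sum_subset (Finset.Icc_subset_Icc_right hk)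
    (fun i hi hni => if_neg (by simp [Finset.mem_Icc] at hi hni; omega))]
  exact Finset.sum_congr rfl fun i hi => if_pos (Finset.mem_Icc.mp hi).2

/-- expansion of an arbitrary weight `Λ` in terms of the type 2 unitary graded
fundamental weights `Ω̄_i = ω̄_i + (m−i+1)ω̄_{m+1}`, `Ω̄_μ = ω̄_{m+μ}`, `ε̄ = ω̄_{m+1}`, `δ = ω̄_1`. -/
theorem weight_expansion_fundamental (m n : ℕ) (hm : 0 < m) (hn : 0 < n)
    (Λ : Fin (m + n) → ℝ) :
    Λ = (∑ i ∈ Finset.Icc 2 m, gform m n Λ (phiBar m n i) •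
            (omegaBar m n i + ((m : ℝ) - (i : ℝ) + 1) • omegaBar m n (m + 1)))
      - (∑ μ ∈ Finset.Icc 2 n, gform m n Λ (phiBar m n (m + μ)) • omegaBar m n (m + μ))
      - (gform m n Λ (phiBar m n (m + 1))
          + ∑ i ∈ Finset.Icc 2 m, ((m : ℝ) - (i : ℝ) + 1) * gform m n Λ (phiBar m n i)) •
          omegaBar m n (m + 1)
      + gform m n Λ (phiBar m n 1) • omegaBar m n 1 := by
  funext j
  have hj : (j:ℕ) < m + n := j.isLt
  simp only [Pi.add_apply, Pi.sub_apply, Pi.smul_apply, Finset.sum_apply, smul_eq_mul]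
  rw [← comp_val m n Λ j, gform_phi1 m n hm Λ, gform_phi_m1 m n hm hn Λ,
    omegaBar_apply_le m n 1 hm j, omegaBar_apply_gt m n 1 le_rfl j]
  by_cases hjm : (j:ℕ) + 1 ≤ m
  · rw [if_pos hjm, if_pos hjm, if_pos (by omega)]
    have S1 : ∑ i ∈ Finset.Icc 2 m, gform m n Λ (phiBar m n i) *
        (omegaBar m n i j + ((m : ℝ) - (i : ℝ) + 1) * (0:ℝ))
        = -(comp m n Λ 1 - comp m n Λ ((j:ℕ)+1)) := by
      rw [Finset.sum_congr rfl
        (g := fun i => if i ≤ (j:ℕ)+1 then -(comp m n Λ (i-1) - comp m n Λ i) else 0)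
        (fun i hi => by
          rw [Finset.mem_Icc] at hi
          rw [gform_phi_mid m n Λ i hi.1 hi.2, omegaBar_apply_le m n i hi.2 j, if_pos hjm]
          split <;> ring)]
      rw [restrict _ _ _ hjm, Finset.sum_neg_distrib, tele (comp m n Λ) ((j:ℕ)+1) (by omega)]
    rw [S1]
    have S2 : ∑ μ ∈ Finset.Icc 2 n, gform m n Λ (phiBar m n (m+μ)) * omegaBar m n (m+μ) j
        = 0 := by
      apply Finset.sum_eq_zero
      intro μ hμ; rw [Finset.mem_Icc] at hμ
      rw [omegaBar_apply_gt m n μ (by omega) j, if_pos hjm]; ring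
    rw [S2]
    ring
  · rw [if_neg hjm, if_neg hjm, if_pos (by omega)]
    have hk : (j:ℕ)+1-m ≤ n := by omega
    have S1 : ∑ i ∈ Finset.Icc 2 m, gform m n Λ (phiBar m n i) *
        (omegaBar m n i j + ((m : ℝ) - (i : ℝ) + 1) * (-1:ℝ))
        = ∑ i ∈ Finset.Icc 2 m, (comp m n Λ (i-1) - comp m n Λ i) *
            (1 + ((m : ℝ) - (i : ℝ) + 1) * (-1:ℝ)) := by
      refine Finset.sum_congr rfl (fun i hi => ?_)
      rw [Finset.mem_Icc] at hi
      rw [gform_phi_mid m n Λ i hi.1 hi.2, omegaBar_apply_le m n i hi.2 j, if_neg hjm]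
    rw [S1]
    have S2 : ∑ μ ∈ Finset.Icc 2 n, gform m n Λ (phiBar m n (m+μ)) * omegaBar m n (m+μ) j
        = comp m n Λ (m+1) - comp m n Λ ((j:ℕ)+1) := by
      rw [Finset.sum_congr rfl
        (g := fun μ => if μ ≤ (j:ℕ)+1-m then
          ((fun ν => comp m n Λ (m+ν)) (μ-1) - (fun ν => comp m n Λ (m+ν)) μ) else 0)
        (fun μ hμ => by
          rw [Finset.mem_Icc] at hμ
          rw [gform_phi_mu m n Λ μ hμ.1 hμ.2, omegaBar_apply_gt m n μ (by omega) j,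
            if_neg hjm]
          simp only
          have e : m + (μ - 1) = m + μ - 1 := by omega
          rw [e]
          split <;> ring)]
      rw [restrict _ _ _ hk, tele (fun ν => comp m n Λ (m+ν)) ((j:ℕ)+1-m) (by omega)]
      congr 2
      omega
    rw [S2]
    have SX : ∑ i ∈ Finset.Icc 2 m, ((m : ℝ) - (i : ℝ) + 1) * gform m n Λ (phiBar m n i)
        = ∑ i ∈ Finset.Icc 2 m, ((m : ℝ) - (i : ℝ) + 1) *
            (comp m n Λ (i-1) - comp m n Λ i) := by
      refine Finset.sum_congr rfl (fun i hi => ?_)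
      rw [Finset.mem_Icc] at hi
      rw [gform_phi_mid m n Λ i hi.1 hi.2]
    rw [SX]
    have key : (∑ i ∈ Finset.Icc 2 m, (comp m n Λ (i-1) - comp m n Λ i) *
            (1 + ((m : ℝ) - (i : ℝ) + 1) * (-1:ℝ)))
        + (∑ i ∈ Finset.Icc 2 m, ((m : ℝ) - (i : ℝ) + 1) *
            (comp m n Λ (i-1) - comp m n Λ i))
        = comp m n Λ 1 - comp m n Λ m := by
      rw [← Finset.sum_add_distrib]
      rw [Finset.sum_congr rfl
        (g := fun i => comp m n Λ (i-1) - comp m n Λ i) (fun i hi => by ring)]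
      exact tele (comp m n Λ) m hm
    linarith [key]
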